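/- arXiv:1710.09332 — 2 statements merged into one kernel-verified Lean document; each statement's English description precedes it below -/
import Mathlib

section
/- Let λ > 0, a > 0, k ≥ 1 a natural number, c₀, c₁ ∈ ℝ, and let f : [0,a] → ℝ be continuous. Define u : [0,a] → ℝ by u(x) = cosh(√λ x)·c₀ + (sinh(√λ x)/√λ)·c₁ + ∫₀ˣ (sinh(√λ (x−ξ))/√λ)·f(ξ) dξ. Then for every x ∈ [0,a], λᵏ·e^{2√λ (a−x)}·( u(x) + u'(x)/√λ )² ≤ 3·λᵏ·u(a)² + 3·λ^{k−1}·u'(a)² + 3·λ^{k−1}·( ∫ₓᵃ e^{√λ (a−ξ)}·f(ξ) dξ )². -/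
/-!
Write `s = √λ`. Splitting `sinh (s (x - ξ))` into exponentials (variation of parameters) gives
`u = (e^{s x} P + e^{-s x} Q) / 2`, where `P' = e^{-s x} f / s` and `Q' = -e^{s x} f / s`. These
two contributions cancel in `u'`, so `u + u' / s = e^{s x} P(x)`; integrating `P'` from `x` to `a`
yields the backward identity
`e^{s (a - x)} (u x + u' x / s) = u a + u' a / s - (1 / s) ∫ₓᵃ e^{s (a - ξ)} f`,
and the bound is `(p + q - r)² ≤ 3 (p² + q² + r²)` applied to its right-hand side.
-/

open MeasureTheory Set Real

theorem ContinuousOn.hasDerivWithinAt_integral_Icc {g : ℝ → ℝ} {a b x : ℝ}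
    (hg : ContinuousOn g (Icc a b)) (hx : x ∈ Icc a b) :
    HasDerivWithinAt (fun y => ∫ t in a..y, g t) (g x) (Icc a b) x := by
  have : Fact (x ∈ Icc a b) := ⟨hx⟩
  exact intervalIntegral.integral_hasDerivWithinAt_right
    (hg.mono (uIcc_subset_Icc (left_mem_Icc.2 (hx.1.trans hx.2)) hx)).intervalIntegrable
    (hg.stronglyMeasurableAtFilter_nhdsWithin measurableSet_Icc x) (hg x hx)

noncomputable section

/-- The solution of `u'' = s² u + f`, `u 0 = c₀`, `u' 0 = c₁` given by Duhamel's formula. -/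
def mildSolution (s c₀ c₁ : ℝ) (f : ℝ → ℝ) (x : ℝ) : ℝ :=
  cosh (s * x) * c₀ + sinh (s * x) / s * c₁ + ∫ ξ in (0 : ℝ)..x, sinh (s * (x - ξ)) / s * f ξ

/-- Twice the coefficient of `e^{s x}` in `mildSolution`. -/
def growingCoeff (s c₀ c₁ : ℝ) (f : ℝ → ℝ) (x : ℝ) : ℝ :=
  c₀ + c₁ / s + (∫ ξ in (0 : ℝ)..x, exp (-(s * ξ)) * f ξ) / s

/-- Twice the coefficient of `e^{-s x}` in `mildSolution`. -/
def decayingCoeff (s c₀ c₁ : ℝ) (f : ℝ → ℝ) (x : ℝ) : ℝ :=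
  c₀ - c₁ / s - (∫ ξ in (0 : ℝ)..x, exp (s * ξ) * f ξ) / s

end

section

variable {s : ℝ} (c₀ c₁ : ℝ) {f : ℝ → ℝ} {a x : ℝ}

theorem mildSolution_eq_exp_growingCoeff_add (hs : s ≠ 0)
    (hf : IntervalIntegrable f volume 0 x) :
    mildSolution s c₀ c₁ f x =
      (exp (s * x) * growingCoeff s c₀ c₁ f x + exp (-(s * x)) * decayingCoeff s c₀ c₁ f x) / 2 := by
  have hsplit : ∀ ξ, sinh (s * (x - ξ)) / s * f ξ =
      exp (s * x) / (2 * s) * (exp (-(s * ξ)) * f ξ) -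
        exp (-(s * x)) / (2 * s) * (exp (s * ξ) * f ξ) := by
    intro ξ
    rw [sinh_eq, show s * (x - ξ) = s * x + -(s * ξ) by ring, exp_add,
      show -(s * x + -(s * ξ)) = -(s * x) + s * ξ by ring, exp_add]
    field_simp
  have hint₁ := hf.continuousOn_mul (g := fun ξ => exp (-(s * ξ))) (by fun_prop)
  have hint₂ := hf.continuousOn_mul (g := fun ξ => exp (s * ξ)) (by fun_prop)
  simp only [mildSolution, growingCoeff, decayingCoeff, hsplit]
  rw [intervalIntegral.integral_sub (hint₁.const_mul _) (hint₂.const_mul _),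
    intervalIntegral.integral_const_mul, intervalIntegral.integral_const_mul, cosh_eq, sinh_eq]
  field_simp
  ring

theorem hasDerivWithinAt_growingCoeff (hf : ContinuousOn f (Icc 0 a)) (hx : x ∈ Icc 0 a) :
    HasDerivWithinAt (growingCoeff s c₀ c₁ f) (exp (-(s * x)) * f x / s) (Icc 0 a) x :=
  ((((continuous_exp.comp (by fun_prop)).continuousOn.mul hf).hasDerivWithinAt_integral_Icc
    hx).div_const s).const_add (c₀ + c₁ / s)

theorem hasDerivWithinAt_decayingCoeff (hf : ContinuousOn f (Icc 0 a)) (hx : x ∈ Icc 0 a) :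
    HasDerivWithinAt (decayingCoeff s c₀ c₁ f) (-(exp (s * x) * f x / s)) (Icc 0 a) x :=
  ((((continuous_exp.comp (by fun_prop)).continuousOn.mul hf).hasDerivWithinAt_integral_Icc
    hx).div_const s).const_sub (c₀ - c₁ / s)

theorem hasDerivWithinAt_mildSolution (hs : s ≠ 0) (hf : ContinuousOn f (Icc 0 a))
    (hx : x ∈ Icc 0 a) :
    HasDerivWithinAt (mildSolution s c₀ c₁ f)
      (s * (exp (s * x) * growingCoeff s c₀ c₁ f x -
        exp (-(s * x)) * decayingCoeff s c₀ c₁ f x) / 2) (Icc 0 a) x := by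
  have hsplit : EqOn (mildSolution s c₀ c₁ f) (fun y => (exp (s * y) * growingCoeff s c₀ c₁ f y +
      exp (-(s * y)) * decayingCoeff s c₀ c₁ f y) / 2) (Icc 0 a) := fun y hy =>
    mildSolution_eq_exp_growingCoeff_add c₀ c₁ hs
      (hf.mono (uIcc_subset_Icc (left_mem_Icc.2 (hy.1.trans hy.2)) hy)).intervalIntegrable
  have hexp : HasDerivAt (fun y => exp (s * y)) (exp (s * x) * s) x :=
    (hasDerivAt_exp _).comp x ((hasDerivAt_id x).const_mul s |>.congr_deriv (mul_one s))
  have hexp_neg : HasDerivAt (fun y => exp (-(s * y))) (exp (-(s * x)) * -s) x :=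
    (hasDerivAt_exp _).comp x ((hasDerivAt_id x).const_mul s |>.neg.congr_deriv (by ring))
  refine ((((hexp.hasDerivWithinAt.mul (hasDerivWithinAt_growingCoeff c₀ c₁ hf hx)).add
    (hexp_neg.hasDerivWithinAt.mul (hasDerivWithinAt_decayingCoeff c₀ c₁ hf hx))).div_const
      2).congr_deriv ?_).congr hsplit (hsplit hx)
  rw [exp_neg]
  field_simp
  ring

theorem mildSolution_add_div_eq_exp_mul_growingCoeff (hs : s ≠ 0) (ha : 0 < a)
    (hf : ContinuousOn f (Icc 0 a)) (hx : x ∈ Icc 0 a) {u' : ℝ}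
    (hu' : HasDerivWithinAt (mildSolution s c₀ c₁ f) u' (Icc 0 a) x) :
    mildSolution s c₀ c₁ f x + u' / s = exp (s * x) * growingCoeff s c₀ c₁ f x := by
  rw [(uniqueDiffOn_Icc ha x hx).eq_deriv _ hu' (hasDerivWithinAt_mildSolution c₀ c₁ hs hf hx),
    mildSolution_eq_exp_growingCoeff_add c₀ c₁ hs
      (hf.mono (uIcc_subset_Icc (left_mem_Icc.2 ha.le) hx)).intervalIntegrable]
  field_simp
  ring

theorem exp_mul_exp_mul_growingCoeff_eq_sub_integral (hf : ContinuousOn f (Icc 0 a))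
    (hx : x ∈ Icc 0 a) :
    exp (s * (a - x)) * (exp (s * x) * growingCoeff s c₀ c₁ f x) =
      exp (s * a) * growingCoeff s c₀ c₁ f a - (∫ ξ in x..a, exp (s * (a - ξ)) * f ξ) / s := by
  have hg : ContinuousOn (fun ξ => exp (-(s * ξ)) * f ξ) (Icc 0 a) :=
    (continuous_exp.comp (by fun_prop)).continuousOn.mul hf
  have h0a : (0 : ℝ) ∈ Icc 0 a := left_mem_Icc.2 (hx.1.trans hx.2)
  have hsub : (∫ ξ in (0 : ℝ)..a, exp (-(s * ξ)) * f ξ) - ∫ ξ in (0 : ℝ)..x, exp (-(s * ξ)) * f ξ =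
      ∫ ξ in x..a, exp (-(s * ξ)) * f ξ :=
    intervalIntegral.integral_interval_sub_left
      (hg.mono (uIcc_subset_Icc h0a (right_mem_Icc.2 (hx.1.trans hx.2)))).intervalIntegrable
      (hg.mono (uIcc_subset_Icc h0a hx)).intervalIntegrable
  have hshift : (∫ ξ in x..a, exp (s * (a - ξ)) * f ξ) =
      exp (s * a) * ∫ ξ in x..a, exp (-(s * ξ)) * f ξ := by
    rw [← intervalIntegral.integral_const_mul]
    congr 1 with ξ
    rw [← mul_assoc, ← exp_add]
    ring_nf
  rw [hshift, ← hsub, ← mul_assoc, ← exp_add]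
  simp only [growingCoeff]
  ring_nf

end

theorem sq_add_sub_le_three_mul (p q r : ℝ) :
    (p + q - r) ^ 2 ≤ 3 * p ^ 2 + 3 * q ^ 2 + 3 * r ^ 2 := by
  nlinarith [sq_nonneg (p - q), sq_nonneg (p + r), sq_nonneg (q - r)]

theorem pow_mul_sq_le_of_mul_eq {lam E p U V I : ℝ} {k : ℕ} (hlam : 0 < lam) (hk : 1 ≤ k)
    (h : E * p = U + V / √lam - I / √lam) :
    lam ^ k * E ^ 2 * p ^ 2 ≤
      3 * lam ^ k * U ^ 2 + 3 * lam ^ (k - 1) * V ^ 2 + 3 * lam ^ (k - 1) * I ^ 2 := by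
  have hsq : √lam ^ 2 = lam := sq_sqrt hlam.le
  have hk' : lam ^ k = lam ^ (k - 1) * √lam ^ 2 := by rw [hsq, ← pow_succ, Nat.sub_add_cancel hk]
  have hscaled : √lam * (E * p) = √lam * U + V - I := by
    rw [h]
    field_simp
  calc lam ^ k * E ^ 2 * p ^ 2 = lam ^ (k - 1) * (√lam * U + V - I) ^ 2 := by
        rw [← hscaled, hk']
        ring
    _ ≤ lam ^ (k - 1) * (3 * (√lam * U) ^ 2 + 3 * V ^ 2 + 3 * I ^ 2) :=
        mul_le_mul_of_nonneg_left (sq_add_sub_le_three_mul _ _ _) (pow_nonneg hlam.le _)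
    _ = 3 * lam ^ k * U ^ 2 + 3 * lam ^ (k - 1) * V ^ 2 + 3 * lam ^ (k - 1) * I ^ 2 := by
        rw [hk']
        ring

/-- Per-mode three-term bound (2.6) in the derivation of the regularity bound. -/
theorem stmt_5 (lam a : ℝ) (hlam : 0 < lam) (ha : 0 < a) (k : ℕ) (hk : 1 ≤ k)
    (c₀ c₁ : ℝ) (f : ℝ → ℝ) (hf : ContinuousOn f (Icc 0 a))
    (u u' : ℝ → ℝ)
    (hu : ∀ x, u x =
      Real.cosh (Real.sqrt lam * x) * c₀ +
      Real.sinh (Real.sqrt lam * x) / Real.sqrt lam * c₁ +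
      ∫ ξ in (0:ℝ)..x, Real.sinh (Real.sqrt lam * (x - ξ)) / Real.sqrt lam * f ξ)
    (hu' : ∀ x ∈ Icc (0:ℝ) a, HasDerivWithinAt u (u' x) (Icc 0 a) x) :
    ∀ x ∈ Icc (0:ℝ) a,
      lam ^ k * Real.exp (2 * Real.sqrt lam * (a - x)) *
          (u x + u' x / Real.sqrt lam) ^ 2 ≤
        3 * lam ^ k * (u a) ^ 2 + 3 * lam ^ (k - 1) * (u' a) ^ 2 +
          3 * lam ^ (k - 1) *
            (∫ ξ in x..a, Real.exp (Real.sqrt lam * (a - ξ)) * f ξ) ^ 2 := by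
  intro x hx
  obtain rfl : u = mildSolution (√lam) c₀ c₁ f := funext hu
  have hs : √lam ≠ 0 := (sqrt_pos.2 hlam).ne'
  have hback : exp (√lam * (a - x)) * (mildSolution (√lam) c₀ c₁ f x + u' x / √lam) =
      mildSolution (√lam) c₀ c₁ f a + u' a / √lam -
        (∫ ξ in x..a, exp (√lam * (a - ξ)) * f ξ) / √lam := by
    rw [mildSolution_add_div_eq_exp_mul_growingCoeff c₀ c₁ hs ha hf hx (hu' x hx),
      mildSolution_add_div_eq_exp_mul_growingCoeff c₀ c₁ hs ha hf (right_mem_Icc.2 ha.le)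
        (hu' a (right_mem_Icc.2 ha.le)),
      exp_mul_exp_mul_growingCoeff_eq_sub_integral c₀ c₁ hf hx]
  rw [show exp (2 * √lam * (a - x)) = exp (√lam * (a - x)) ^ 2 by rw [← exp_nat_mul]; ring_nf]
  exact pow_mul_sq_le_of_mul_eq hlam hk hback
end

section
/- Let a > 0, k ≥ 2 a natural number, (λ_p)_{p≥1} a sequence of positive reals, (c₀ₚ), (c₁ₚ) real sequences, and for each p let f_p : [0,a] → ℝ be continuous. Define u_p : [0,a] → ℝ by u_p(x) = cosh(√λ_p x)·c₀ₚ + (sinh(√λ_p x)/√λ_p)·c₁ₚ + ∫₀ˣ (sinh(√λ_p (x−ξ))/√λ_p)·f_p(ξ) dξ. Then for every x ∈ [0,a], Σ_{p=1}^∞ λ_pᵏ·e^{2√λ_p (a−x)}·( u_p(x) + u_p'(x)/√λ_p )² ≤ 3·Σ_{p=1}^∞ (1+λ_p)ᵏ·u_p(a)² + 3·Σ_{p=1}^∞ (1+λ_p)^{k−1}·u_p'(a)² + (3/2)·∫₀ᵃ Σ_{p=1}^∞ λ_p^{k−3/2}·e^{2√λ_p a}·f_p(ξ)² dξ, where the sums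 of nonnegative terms are interpreted in [0,∞]. -/
/-!
For a mode with `s = √λ`, Duhamel's formula shows that `w = u + u' / s` only sees the
growing exponential: `w t = e^{st} (c₀ + c₁ / s + s⁻¹ ∫₀ᵗ e^{-sξ} g ξ dξ)`. Hence
`e^{s(a-x)} w x = w a - (e^{sa} / s) ∫ₓᵃ e^{-sξ} g ξ dξ`, and
`(A + B + C)² ≤ 3 (A² + B² + C²)` together with Cauchy–Schwarz and
`∫ₓᵃ e^{-2sξ} dξ ≤ 1 / (2s)` bound `e^{2s(a-x)} (w x)²` by
`3 u(a)² + 3 u'(a)² / λ + 3 / (2 λ^{3/2}) e^{2sa} ∫₀ᵃ g²`. Multiplying by `λᵏ`, using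
`λᵏ ≤ (1 + λ)ᵏ`, `λᵏ / λ ≤ (1 + λ)ᵏ⁻¹` and summing in `[0, ∞]` gives the estimate.
-/

open MeasureTheory Set Real
open scoped ENNReal

theorem sq_integral_mul_le_integral_sq_mul_integral_sq {α : Type*} [MeasurableSpace α]
    {μ : Measure α} {g h : α → ℝ} (hg : Integrable (fun t => g t ^ 2) μ)
    (hh : Integrable (fun t => h t ^ 2) μ) (hgh : Integrable (fun t => g t * h t) μ) :
    (∫ t, g t * h t ∂μ) ^ 2 ≤ (∫ t, g t ^ 2 ∂μ) * ∫ t, h t ^ 2 ∂μ := by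
  have hquad : ∀ r : ℝ,
      0 ≤ (∫ t, g t ^ 2 ∂μ) * (r * r) + (2 * ∫ t, g t * h t ∂μ) * r + ∫ t, h t ^ 2 ∂μ := by
    intro r
    have hexpand : (fun t => (r * g t + h t) ^ 2) =
        fun t => r ^ 2 * g t ^ 2 + 2 * r * (g t * h t) + h t ^ 2 := by
      funext t; ring
    have hnonneg : 0 ≤ ∫ t, (r * g t + h t) ^ 2 ∂μ := integral_nonneg fun t => sq_nonneg _
    have hg' : Integrable (fun t => r ^ 2 * g t ^ 2) μ := hg.const_mul _
    have hgh' : Integrable (fun t => 2 * r * (g t * h t)) μ := hgh.const_mul _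
    have hsum : Integrable (fun t => r ^ 2 * g t ^ 2 + 2 * r * (g t * h t)) μ := hg'.add hgh'
    rw [hexpand, integral_add hsum hh, integral_add hg' hgh', integral_const_mul,
      integral_const_mul] at hnonneg
    linarith
  have hdiscrim := discrim_le_zero hquad
  rw [discrim] at hdiscrim
  linarith

theorem integral_exp_neg_mul_sq_le {s x a : ℝ} (hs : 0 < s) (hx : 0 ≤ x) :
    ∫ ξ in x..a, exp (-(s * ξ)) ^ 2 ≤ 1 / (2 * s) := by
  have hsq : ∀ ξ : ℝ, exp (-(s * ξ)) ^ 2 = exp (-(2 * s) * ξ) := fun ξ => by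
    rw [← exp_nat_mul]; congr 1; push_cast; ring
  simp only [hsq]
  rw [intervalIntegral.integral_comp_mul_left exp (by linarith : -(2 * s) ≠ 0),
    integral_exp, smul_eq_mul]
  have hexp_x : exp (-(2 * s) * x) ≤ 1 := exp_le_one_iff.2 (by nlinarith)
  have hexp_a : 0 < exp (-(2 * s) * a) := exp_pos _
  rw [inv_neg, ← one_div]
  have hinv : 0 < 1 / (2 * s) := by positivity
  nlinarith

theorem sq_intervalIntegral_exp_neg_mul_le {s x a : ℝ} (hs : 0 < s) (hx : x ∈ Icc 0 a)
    {g : ℝ → ℝ} (hg : Continuous g) :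
    (∫ ξ in x..a, exp (-(s * ξ)) * g ξ) ^ 2 ≤ 1 / (2 * s) * ∫ ξ in Icc 0 a, g ξ ^ 2 := by
  have hexp : Continuous fun ξ => exp (-(s * ξ)) := by fun_prop
  have hg_sub : ∫ ξ in Ioc x a, g ξ ^ 2 ≤ ∫ ξ in Icc 0 a, g ξ ^ 2 :=
    setIntegral_mono_set (hg.pow 2).integrableOn_Icc (.of_forall fun ξ => sq_nonneg _)
      (LE.le.eventuallyLE fun ξ hξ => ⟨hx.1.trans hξ.1.le, hξ.2⟩)
  have hexp_sq := integral_exp_neg_mul_sq_le (a := a) hs hx.1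
  rw [intervalIntegral.integral_of_le hx.2] at hexp_sq ⊢
  calc (∫ ξ in Ioc x a, exp (-(s * ξ)) * g ξ) ^ 2
      ≤ (∫ ξ in Ioc x a, exp (-(s * ξ)) ^ 2) * ∫ ξ in Ioc x a, g ξ ^ 2 :=
        sq_integral_mul_le_integral_sq_mul_integral_sq (hexp.pow 2).integrableOn_Ioc
          (hg.pow 2).integrableOn_Ioc (hexp.mul hg).integrableOn_Ioc
    _ ≤ 1 / (2 * s) * ∫ ξ in Icc 0 a, g ξ ^ 2 :=
        mul_le_mul hexp_sq hg_sub (setIntegral_nonneg measurableSet_Ioc fun _ _ => sq_nonneg _)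
          (by positivity)

/-- Duhamel's formula for `u'' = s² u + g`, `u 0 = c₀`, `u' 0 = c₁` (when `s ≠ 0`). -/
noncomputable def modeSolution (s c₀ c₁ : ℝ) (g : ℝ → ℝ) (t : ℝ) : ℝ :=
  cosh (s * t) * c₀ + sinh (s * t) / s * c₁ +
    ∫ ξ in (0:ℝ)..t, sinh (s * (t - ξ)) / s * g ξ

namespace modeSolution

variable {s c₀ c₁ : ℝ} {g : ℝ → ℝ}

theorem eq_of_eqOn {a t : ℝ} {g' : ℝ → ℝ} (hgg' : EqOn g g' (Icc 0 a))
    (ht : t ∈ Icc 0 a) :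
    modeSolution s c₀ c₁ g t = modeSolution s c₀ c₁ g' t := by
  refine congrArg _ (intervalIntegral.integral_congr fun ξ hξ => ?_)
  rw [uIcc_of_le ht.1] at hξ
  simp only [hgg' ⟨hξ.1, hξ.2.trans ht.2⟩]

theorem eq_sinh_mul_sub_cosh_mul (hg : Continuous g) (t : ℝ) :
    modeSolution s c₀ c₁ g t = cosh (s * t) * c₀ + sinh (s * t) / s * c₁ +
      (sinh (s * t) / s * (∫ ξ in (0:ℝ)..t, cosh (s * ξ) * g ξ) -
        cosh (s * t) / s * ∫ ξ in (0:ℝ)..t, sinh (s * ξ) * g ξ) := by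
  have hsplit : ∀ ξ, sinh (s * (t - ξ)) / s * g ξ =
      sinh (s * t) / s * (cosh (s * ξ) * g ξ) - cosh (s * t) / s * (sinh (s * ξ) * g ξ) :=
    fun ξ => by rw [mul_sub, sinh_sub]; ring
  have hcosh : Continuous fun ξ => cosh (s * ξ) * g ξ := by fun_prop
  have hsinh : Continuous fun ξ => sinh (s * ξ) * g ξ := by fun_prop
  rw [modeSolution, ← intervalIntegral.integral_const_mul,
    ← intervalIntegral.integral_const_mul,
    ← intervalIntegral.integral_sub ((hcosh.intervalIntegrable 0 t).const_mul _)
      ((hsinh.intervalIntegrable 0 t).const_mul _)]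
  simp only [hsplit]

theorem hasDerivAt (hs : s ≠ 0) (hg : Continuous g) (t : ℝ) :
    HasDerivAt (modeSolution s c₀ c₁ g)
      (s * sinh (s * t) * c₀ + cosh (s * t) * c₁ +
        (cosh (s * t) * (∫ ξ in (0:ℝ)..t, cosh (s * ξ) * g ξ) -
          sinh (s * t) * ∫ ξ in (0:ℝ)..t, sinh (s * ξ) * g ξ)) t := by
  have hcosh : Continuous fun ξ => cosh (s * ξ) * g ξ := by fun_prop
  have hsinh : Continuous fun ξ => sinh (s * ξ) * g ξ := by fun_prop
  have hlin : HasDerivAt (fun t => s * t) s t := by simpa using (hasDerivAt_id t).const_mul s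
  have hF := intervalIntegral.integral_hasDerivAt_right (hcosh.intervalIntegrable 0 t)
    (hcosh.stronglyMeasurableAtFilter _ _) hcosh.continuousAt
  have hG := intervalIntegral.integral_hasDerivAt_right (hsinh.intervalIntegrable 0 t)
    (hsinh.stronglyMeasurableAtFilter _ _) hsinh.continuousAt
  rw [funext (eq_sinh_mul_sub_cosh_mul (s := s) (c₀ := c₀) (c₁ := c₁) hg)]
  refine ((hlin.cosh.mul_const c₀).add ((hlin.sinh.div_const s).mul_const c₁) |>.add
    (((hlin.sinh.div_const s).mul hF).sub ((hlin.cosh.div_const s).mul hG))).congr_deriv ?_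
  field_simp
  ring

theorem add_deriv_div (hs : s ≠ 0) (hg : Continuous g) (t : ℝ) :
    modeSolution s c₀ c₁ g t + deriv (modeSolution s c₀ c₁ g) t / s =
      exp (s * t) * (c₀ + c₁ / s + 1 / s * ∫ ξ in (0:ℝ)..t, exp (-(s * ξ)) * g ξ) := by
  have hcosh : Continuous fun ξ => cosh (s * ξ) * g ξ := by fun_prop
  have hsinh : Continuous fun ξ => sinh (s * ξ) * g ξ := by fun_prop
  have hexp : ∫ ξ in (0:ℝ)..t, exp (-(s * ξ)) * g ξ =
      (∫ ξ in (0:ℝ)..t, cosh (s * ξ) * g ξ) - ∫ ξ in (0:ℝ)..t, sinh (s * ξ) * g ξ := by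
    rw [← intervalIntegral.integral_sub (hcosh.intervalIntegrable 0 t)
      (hsinh.intervalIntegrable 0 t)]
    simp only [← sub_mul, cosh_sub_sinh]
  rw [(hasDerivAt hs hg t).deriv, eq_sinh_mul_sub_cosh_mul hg, hexp, ← cosh_add_sinh]
  field_simp
  ring

theorem exp_mul_sq_add_deriv_div_le (hs : 0 < s) (hg : Continuous g) {a x : ℝ}
    (hx : x ∈ Icc 0 a) :
    exp (2 * s * (a - x)) *
        (modeSolution s c₀ c₁ g x + deriv (modeSolution s c₀ c₁ g) x / s) ^ 2 ≤
      3 * modeSolution s c₀ c₁ g a ^ 2 + 3 * deriv (modeSolution s c₀ c₁ g) a ^ 2 / s ^ 2 +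
        3 / (2 * s ^ 3) * exp (2 * s * a) * ∫ ξ in Icc 0 a, g ξ ^ 2 := by
  set u := modeSolution s c₀ c₁ g
  set I := ∫ ξ in x..a, exp (-(s * ξ)) * g ξ
  have hcont : Continuous fun ξ => exp (-(s * ξ)) * g ξ := by fun_prop
  have hshift : exp (s * (a - x)) * (u x + deriv u x / s) =
      u a + deriv u a / s - exp (s * a) / s * I := by
    have hexp : exp (s * (a - x)) * exp (s * x) = exp (s * a) := by rw [← exp_add]; ring_nf
    rw [add_deriv_div hs.ne' hg, add_deriv_div hs.ne' hg,
      ← intervalIntegral.integral_add_adjacent_intervals (hcont.intervalIntegrable 0 x)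
        (hcont.intervalIntegrable x a)]
    linear_combination
      (c₀ + c₁ / s + 1 / s * ∫ ξ in (0:ℝ)..x, exp (-(s * ξ)) * g ξ) * hexp
  have hsq : exp (2 * s * (a - x)) * (u x + deriv u x / s) ^ 2 =
      (u a + deriv u a / s - exp (s * a) / s * I) ^ 2 := by
    rw [← hshift, mul_pow, ← exp_nat_mul]; ring_nf
  have hexp_sq : (exp (s * a) / s) ^ 2 = exp (2 * s * a) / s ^ 2 := by
    rw [div_pow, ← exp_nat_mul]; ring_nf
  have hI : (exp (s * a) / s) ^ 2 * I ^ 2 ≤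
      exp (2 * s * a) / s ^ 2 * (1 / (2 * s) * ∫ ξ in Icc 0 a, g ξ ^ 2) := by
    rw [hexp_sq]
    exact mul_le_mul_of_nonneg_left (sq_intervalIntegral_exp_neg_mul_le hs hx hg) (by positivity)
  rw [hsq]
  calc (u a + deriv u a / s - exp (s * a) / s * I) ^ 2
      ≤ 3 * u a ^ 2 + 3 * (deriv u a / s) ^ 2 + 3 * ((exp (s * a) / s) ^ 2 * I ^ 2) := by
        nlinarith [sq_nonneg (u a - deriv u a / s),
          sq_nonneg (deriv u a / s + exp (s * a) / s * I), sq_nonneg (u a + exp (s * a) / s * I)]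
    _ ≤ 3 * u a ^ 2 + 3 * deriv u a ^ 2 / s ^ 2 +
        3 / (2 * s ^ 3) * exp (2 * s * a) * ∫ ξ in Icc 0 a, g ξ ^ 2 := by
      have hfactor : exp (2 * s * a) / s ^ 2 * (1 / (2 * s) * ∫ ξ in Icc 0 a, g ξ ^ 2) =
          1 / (2 * s ^ 3) * exp (2 * s * a) * ∫ ξ in Icc 0 a, g ξ ^ 2 := by
        field_simp
      linear_combination 3 * hI + 3 * hfactor

end modeSolution

theorem exp_mul_sq_add_div_le_of_eqOn_modeSolution {a s x c₀ c₁ : ℝ} (ha : 0 < a)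
    (hs : 0 < s) {f u u' : ℝ → ℝ} (hf : ContinuousOn f (Icc 0 a))
    (hu : ∀ t ∈ Icc 0 a, u t = modeSolution s c₀ c₁ f t)
    (hu' : ∀ t ∈ Icc 0 a, HasDerivWithinAt u (u' t) (Icc 0 a) t) (hx : x ∈ Icc 0 a) :
    exp (2 * s * (a - x)) * (u x + u' x / s) ^ 2 ≤
      3 * u a ^ 2 + 3 * u' a ^ 2 / s ^ 2 +
        3 / (2 * s ^ 3) * exp (2 * s * a) * ∫ ξ in Icc 0 a, f ξ ^ 2 := by
  set g := IccExtend ha.le ((Icc 0 a).domRestrict f)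
  have hg : Continuous g := hf.domRestrict.Icc_extend'
  have hfg : EqOn f g (Icc 0 a) := fun t ht =>
    (IccExtend_of_mem ha.le ((Icc 0 a).domRestrict f) ht).symm
  have hug : ∀ t ∈ Icc 0 a, u t = modeSolution s c₀ c₁ g t := fun t ht =>
    (hu t ht).trans (modeSolution.eq_of_eqOn hfg ht)
  have hu'g : ∀ t ∈ Icc 0 a, u' t = deriv (modeSolution s c₀ c₁ g) t := fun t ht =>
    (uniqueDiffOn_Icc ha t ht).eq_deriv _ (hu' t ht)
      ((modeSolution.hasDerivAt hs.ne' hg t).differentiableAt.hasDerivAt.hasDerivWithinAt.congr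
        hug (hug t ht))
  have hfg_sq : ∫ ξ in Icc 0 a, f ξ ^ 2 = ∫ ξ in Icc 0 a, g ξ ^ 2 :=
    setIntegral_congr_fun measurableSet_Icc fun ξ hξ => by rw [hfg hξ]
  have ha_mem : a ∈ Icc 0 a := ⟨ha.le, le_rfl⟩
  rw [hug x hx, hug a ha_mem, hu'g x hx, hu'g a ha_mem, hfg_sq]
  exact modeSolution.exp_mul_sq_add_deriv_div_le hs hg hx

theorem rpow_natCast_sub_three_halves {l : ℝ} (hl : 0 < l) (k : ℕ) :
    l ^ ((k : ℝ) - 3 / 2) = l ^ k / √l ^ 3 := by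
  rw [rpow_sub hl, rpow_natCast, sqrt_eq_rpow, ← rpow_mul_natCast hl.le]
  norm_num

theorem pow_mul_exp_mul_sq_add_div_le {a l x c₀ c₁ : ℝ} (ha : 0 < a) (hl : 0 < l) {k : ℕ}
    (hk : 1 ≤ k) {f u u' : ℝ → ℝ} (hf : ContinuousOn f (Icc 0 a))
    (hu : ∀ t ∈ Icc 0 a, u t = modeSolution (√l) c₀ c₁ f t)
    (hu' : ∀ t ∈ Icc 0 a, HasDerivWithinAt u (u' t) (Icc 0 a) t) (hx : x ∈ Icc 0 a) :
    l ^ k * exp (2 * √l * (a - x)) * (u x + u' x / √l) ^ 2 ≤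
      3 * ((1 + l) ^ k * u a ^ 2) + 3 * ((1 + l) ^ (k - 1) * u' a ^ 2) +
        3 / 2 * ∫ ξ in Icc 0 a, l ^ ((k : ℝ) - 3 / 2) * exp (2 * √l * a) * f ξ ^ 2 := by
  have hmode := exp_mul_sq_add_div_le_of_eqOn_modeSolution ha (sqrt_pos.2 hl) hf hu hu' hx
  have hpow : l ^ k = l * l ^ (k - 1) := by rw [← pow_succ', Nat.sub_add_cancel hk]
  have hA : l ^ k ≤ (1 + l) ^ k := pow_le_pow_left₀ hl.le (by linarith) k
  have hB : l ^ (k - 1) ≤ (1 + l) ^ (k - 1) := pow_le_pow_left₀ hl.le (by linarith) _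
  have hsq : √l ^ 2 = l := sq_sqrt hl.le
  have hC : 0 ≤ ∫ ξ in Icc 0 a, f ξ ^ 2 :=
    setIntegral_nonneg measurableSet_Icc fun _ _ => sq_nonneg _
  rw [integral_const_mul, rpow_natCast_sub_three_halves hl, mul_assoc (l ^ k)]
  calc l ^ k * (exp (2 * √l * (a - x)) * (u x + u' x / √l) ^ 2)
      ≤ l ^ k * (3 * u a ^ 2 + 3 * u' a ^ 2 / √l ^ 2 +
          3 / (2 * √l ^ 3) * exp (2 * √l * a) * ∫ ξ in Icc 0 a, f ξ ^ 2) :=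
        mul_le_mul_of_nonneg_left hmode (by positivity)
    _ = 3 * (l ^ k * u a ^ 2) + 3 * (l ^ (k - 1) * u' a ^ 2) +
          3 / 2 * (l ^ k / √l ^ 3 * exp (2 * √l * a) * ∫ ξ in Icc 0 a, f ξ ^ 2) := by
        rw [hsq, hpow]; field_simp
    _ ≤ _ := by gcongr

theorem ENNReal.tsum_ofReal_le_of_le {α : Type*} [MeasurableSpace α] {μ : Measure α}
    {X A B : ℕ → ℝ} {h : ℕ → α → ℝ} {a b c : ℝ} (ha : 0 ≤ a) (hb : 0 ≤ b) (hc : 0 ≤ c)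
    (hint : ∀ p, Integrable (h p) μ) (hnn : ∀ p, 0 ≤ᵐ[μ] h p)
    (hX : ∀ p, X p ≤ a * A p + b * B p + c * ∫ ξ, h p ξ ∂μ) :
    ∑' p, ENNReal.ofReal (X p) ≤
      ENNReal.ofReal a * ∑' p, ENNReal.ofReal (A p) +
          ENNReal.ofReal b * ∑' p, ENNReal.ofReal (B p) +
        ENNReal.ofReal c * ∫⁻ ξ, ∑' p, ENNReal.ofReal (h p ξ) ∂μ := by
  rw [lintegral_tsum fun p => (hint p).aemeasurable.ennreal_ofReal, ← ENNReal.tsum_mul_left,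
    ← ENNReal.tsum_mul_left, ← ENNReal.tsum_mul_left, ← ENNReal.tsum_add, ← ENNReal.tsum_add]
  refine ENNReal.tsum_le_tsum fun p => ?_
  rw [← ofReal_integral_eq_lintegral_ofReal (hint p) (hnn p), ← ENNReal.ofReal_mul ha,
    ← ENNReal.ofReal_mul hb, ← ENNReal.ofReal_mul hc]
  exact (ENNReal.ofReal_le_ofReal (hX p)).trans
    ((ENNReal.ofReal_add_le).trans (add_le_add_left ENNReal.ofReal_add_le _))

/-- Regularity bound of Theorem 2.1 in the case `k ≥ 2`, in Fourier-coefficient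
form; sums of nonnegative terms are taken in `[0,∞]`. -/
theorem stmt_7 (a : ℝ) (ha : 0 < a) (k : ℕ) (hk : 2 ≤ k)
    (lam : ℕ → ℝ) (hlam : ∀ p, 0 < lam p) (c₀ c₁ : ℕ → ℝ)
    (f : ℕ → ℝ → ℝ) (hf : ∀ p, ContinuousOn (f p) (Icc 0 a))
    (u u' : ℕ → ℝ → ℝ)
    (hu : ∀ p x, u p x =
      Real.cosh (Real.sqrt (lam p) * x) * c₀ p +
      Real.sinh (Real.sqrt (lam p) * x) / Real.sqrt (lam p) * c₁ p +
      ∫ ξ in (0:ℝ)..x,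
        Real.sinh (Real.sqrt (lam p) * (x - ξ)) / Real.sqrt (lam p) * f p ξ)
    (hu' : ∀ p, ∀ x ∈ Icc (0:ℝ) a, HasDerivWithinAt (u p) (u' p x) (Icc 0 a) x) :
    ∀ x ∈ Icc (0:ℝ) a,
      (∑' p : ℕ, ENNReal.ofReal
          (lam p ^ k * Real.exp (2 * Real.sqrt (lam p) * (a - x)) *
            (u p x + u' p x / Real.sqrt (lam p)) ^ 2)) ≤
        3 * (∑' p : ℕ, ENNReal.ofReal ((1 + lam p) ^ k * (u p a) ^ 2)) +
        3 * (∑' p : ℕ, ENNReal.ofReal ((1 + lam p) ^ (k - 1) * (u' p a) ^ 2)) +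
        (3 / 2 : ℝ≥0∞) *
          ∫⁻ ξ in Icc (0:ℝ) a, ∑' p : ℕ, ENNReal.ofReal
            (lam p ^ ((k : ℝ) - 3 / 2) * Real.exp (2 * Real.sqrt (lam p) * a) *
              (f p ξ) ^ 2) := by
  intro x hx
  have hbound := ENNReal.tsum_ofReal_le_of_le (μ := volume.restrict (Icc 0 a))
    (h := fun p ξ => lam p ^ ((k : ℝ) - 3 / 2) * exp (2 * √(lam p) * a) * f p ξ ^ 2)
    (by norm_num : (0:ℝ) ≤ 3) (by norm_num : (0:ℝ) ≤ 3) (by norm_num : (0:ℝ) ≤ 3 / 2)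
    (fun p => ((hf p).pow 2).integrableOn_Icc.const_mul _)
    (fun p => .of_forall fun ξ =>
      mul_nonneg (mul_nonneg (rpow_nonneg (hlam p).le _) (exp_pos _).le) (sq_nonneg _))
    (fun p => pow_mul_exp_mul_sq_add_div_le (k := k) ha (hlam p) (by omega) (hf p)
      (fun t _ => hu p t) (hu' p) hx)
  rwa [ENNReal.ofReal_ofNat, ENNReal.ofReal_div_of_pos two_pos, ENNReal.ofReal_ofNat,
    ENNReal.ofReal_ofNat] at hbound
end
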